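/- Let A = (A_1, A_2) be a pair of real symmetric 2×2 matrices with entries A_k = [[a_{11k}, a_{12k}],[a_{12k}, a_{22k}]], and suppose the free spectrahedron D_A is bounded at level 1 (i.e., {x ∈ ℝ² : I + x_1 A_1 + x_2 A_2 ⪰ 0} is bounded). Then the 3×3 matrix W = [[1, (a_{111}+a_{221})/2, (a_{112}+a_{222})/2],[0, (a_{111}-a_{221})/2, (a_{112}-a_{222})/2],[0, a_{121}, a_{122}]] is invertible. -/

import Mathlib

/-!
If `det W = 0`, the vectors `(a₁₂₁, a₁₂₂)` and `(a₁₁₁ - a₂₂₁, a₁₁₂ - a₂₂₂)` are linearly dependent,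
so some `c ≠ 0` is orthogonal to both. Then `c₁ A₁ + c₂ A₂` has vanishing off-diagonal entries and
equal diagonal entries, i.e. it is a multiple `t • 1` of the identity. Replacing `c` by `-c` if
`t < 0`, this combination is positive semidefinite, so the spectrahedron contains the whole ray
`ℝ≥0 • c` and is unbounded.
-/

open Matrix Bornology

lemma not_isBounded_of_forall_nonneg_smul_mem {E : Type*} [NormedAddCommGroup E]
    [NormedSpace ℝ E] {S : Set E} {v : E} (hv : v ≠ 0) (hS : ∀ s : ℝ, 0 ≤ s → s • v ∈ S) :
    ¬IsBounded S := by
  intro hbdd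
  obtain ⟨C, hC⟩ := isBounded_iff_forall_norm_le.mp hbdd
  have hv' : 0 < ‖v‖ := norm_pos_iff.mpr hv
  have hs : 0 ≤ (|C| + 1) / ‖v‖ := by positivity
  have h := hC _ (hS _ hs)
  rw [norm_smul, Real.norm_of_nonneg hs, div_mul_cancel₀ _ hv'.ne'] at h
  linarith [le_abs_self C]

lemma not_isBounded_of_posSemidef_smul_add_smul {n : Type*} [DecidableEq n]
    {A₁ A₂ : Matrix n n ℝ} {c : ℝ × ℝ} (hc0 : c ≠ 0) (hc : (c.1 • A₁ + c.2 • A₂).PosSemidef) :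
    ¬IsBounded {x : ℝ × ℝ | (1 + x.1 • A₁ + x.2 • A₂).PosSemidef} := by
  refine not_isBounded_of_forall_nonneg_smul_mem hc0 fun s hs => ?_
  have hray : 1 + (s • c).1 • A₁ + (s • c).2 • A₂ = 1 + s • (c.1 • A₁ + c.2 • A₂) := by
    rw [Prod.smul_fst, Prod.smul_snd, smul_add, smul_smul, smul_smul, add_assoc, smul_eq_mul,
      smul_eq_mul]
  rw [Set.mem_ofPred_eq, hray]
  exact PosSemidef.one.add (hc.smul hs)

lemma exists_ne_zero_posSemidef_smul_add_smul {a₁₁ a₁₂ a₂₂ b₁₁ b₁₂ b₂₂ : ℝ}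
    (hdep : (a₁₁ - a₂₂) * b₁₂ = (b₁₁ - b₂₂) * a₁₂) :
    ∃ c : ℝ × ℝ, c ≠ 0 ∧
      (c.1 • !![a₁₁, a₁₂; a₁₂, a₂₂] + c.2 • !![b₁₁, b₁₂; b₁₂, b₂₂]).PosSemidef := by
  obtain ⟨v, hv0, hv⟩ : ∃ v, v ≠ 0 ∧ !![a₁₂, b₁₂; a₁₁ - a₂₂, b₁₁ - b₂₂] *ᵥ v = 0 :=
    exists_mulVec_eq_zero_iff.mpr (by rw [det_fin_two_of]; linarith)
  have hoff : a₁₂ * v 0 + b₁₂ * v 1 = 0 := by simpa [vecHead, vecTail] using congrFun hv 0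
  have hdiag : (a₁₁ - a₂₂) * v 0 + (b₁₁ - b₂₂) * v 1 = 0 := by
    simpa [vecHead, vecTail] using congrFun hv 1
  set t := v 0 * a₁₁ + v 1 * b₁₁
  have hscalar : v 0 • !![a₁₁, a₁₂; a₁₂, a₂₂] + v 1 • !![b₁₁, b₁₂; b₁₂, b₂₂] = t • 1 := by
    ext i j
    fin_cases i <;> fin_cases j <;> simp [t] <;> linarith
  have hc0 : (v 0, v 1) ≠ 0 := by
    contrapose! hv0
    ext i
    fin_cases i <;> simp_all [Prod.ext_iff]
  rcases le_total 0 t with ht | ht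
  · exact ⟨(v 0, v 1), hc0, by rw [hscalar]; exact PosSemidef.one.smul ht⟩
  · refine ⟨-(v 0, v 1), neg_ne_zero.mpr hc0, ?_⟩
    rw [Prod.fst_neg, Prod.snd_neg, neg_smul, neg_smul, ← neg_add, hscalar, ← neg_smul]
    exact PosSemidef.one.smul (neg_nonneg.mpr ht)

theorem stmt10 (a111 a121 a221 a112 a122 a222 : ℝ)
    (hbdd : Bornology.IsBounded {x : ℝ × ℝ |
        ((1 : Matrix (Fin 2) (Fin 2) ℝ) +
          x.1 • (!![a111, a121; a121, a221] : Matrix (Fin 2) (Fin 2) ℝ) +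
          x.2 • (!![a112, a122; a122, a222] : Matrix (Fin 2) (Fin 2) ℝ)).PosSemidef}) :
    IsUnit (!![1, (a111 + a221) / 2, (a112 + a222) / 2;
               0, (a111 - a221) / 2, (a112 - a222) / 2;
               0, a121, a122] : Matrix (Fin 3) (Fin 3) ℝ) := by
  rw [isUnit_iff_isUnit_det, isUnit_iff_ne_zero]
  intro hdet
  have hdep : (a111 - a221) * a122 = (a112 - a222) * a121 := by
    rw [det_fin_three] at hdet
    simp only [Fin.isValue, of_apply, cons_val', cons_val_zero, cons_val_fin_one, cons_val_one,
      cons_val, one_mul, mul_zero, zero_mul, sub_zero, add_zero] at hdet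
    linarith
  obtain ⟨c, hc0, hc⟩ := exists_ne_zero_posSemidef_smul_add_smul hdep
  exact not_isBounded_of_posSemidef_smul_add_smul hc0 hc hbdd
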